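/- arXiv:1905.02469 — 7 statements merged into one kernel-verified Lean document; each statement's English description precedes it below -/
import Mathlib

section
/- For any matrix A ∈ ℝⁿˣⁿ and any vector y ∈ ℝⁿ: (1/√n)·‖Aᵀy‖₁ ≤ ‖Aᵀy‖₂ ≤ ‖Aᵀy‖₁. Consequently, if (x̂, ŷ) minimizes Cᵀx + c̲ᵀy + ‖Aᵀy‖₁ over a set Z and (x*, y*) minimizes Cᵀx + c̲ᵀy + ‖Aᵀy‖₂ over Z, with C, c̲ nonnegative and all feasible x, y nonnegative, then Cᵀx̂ + c̲ᵀŷ + ‖Aᵀŷ‖₂ ≤ √n · (Cᵀx* + c̲ᵀy* + ‖Aᵀy*‖₂). -/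
section NormComparison

variable {ι : Type*} [Fintype ι]

lemma sqrt_sum_sq_le_sum_abs (v : ι → ℝ) : √(∑ j, v j ^ 2) ≤ ∑ j, |v j| := by
  have hsum : 0 ≤ ∑ j, |v j| := Finset.sum_nonneg fun j _ => abs_nonneg (v j)
  refine Real.sqrt_le_iff.mpr ⟨hsum, ?_⟩
  simpa only [sq_abs] using
    Finset.sum_sq_le_sq_sum_of_nonneg (s := Finset.univ) fun j _ => abs_nonneg (v j)

lemma sum_abs_le_sqrt_card_mul_sqrt_sum_sq (v : ι → ℝ) :
    ∑ j, |v j| ≤ √(Fintype.card ι) * √(∑ j, v j ^ 2) := by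
  rw [← Real.sqrt_mul (Nat.cast_nonneg _)]
  refine Real.le_sqrt_of_sq_le ?_
  simpa only [Finset.card_univ, sq_abs] using
    sq_sum_le_card_mul_sum_sq (s := Finset.univ) (f := fun j => |v j|)

lemma one_div_sqrt_card_mul_sum_abs_le_sqrt_sum_sq (v : ι → ℝ) :
    1 / √(Fintype.card ι) * ∑ j, |v j| ≤ √(∑ j, v j ^ 2) := by
  rw [one_div_mul_eq_div]
  exact div_le_of_le_mul₀ (Real.sqrt_nonneg _) (Real.sqrt_nonneg _)
    (by rw [mul_comm]; exact sum_abs_le_sqrt_card_mul_sqrt_sum_sq v)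

end NormComparison

theorem stmt6_general (n : ℕ) (A : Fin n → Fin n → ℝ) (C cb : Fin n → ℝ)
    (Z : Set ((Fin n → ℝ) × (Fin n → ℝ)))
    (hC : ∀ i, 0 ≤ C i) (hcb : ∀ i, 0 ≤ cb i)
    (hZnn : ∀ p ∈ Z, ∀ i, 0 ≤ p.1 i ∧ 0 ≤ p.2 i)
    (xh yh xs ys : Fin n → ℝ)
    (hmem2 : (xs, ys) ∈ Z)
    (hopt1 : ∀ p ∈ Z,
      (∑ i, C i * xh i) + (∑ i, cb i * yh i) + (∑ j, |∑ i, A i j * yh i|) ≤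
        (∑ i, C i * p.1 i) + (∑ i, cb i * p.2 i) + (∑ j, |∑ i, A i j * p.2 i|)) :
    (∀ y : Fin n → ℝ,
      (1 / Real.sqrt n) * (∑ j, |∑ i, A i j * y i|) ≤
          Real.sqrt (∑ j, (∑ i, A i j * y i) ^ 2) ∧
        Real.sqrt (∑ j, (∑ i, A i j * y i) ^ 2) ≤ ∑ j, |∑ i, A i j * y i|) ∧
    (∑ i, C i * xh i) + (∑ i, cb i * yh i)
        + Real.sqrt (∑ j, (∑ i, A i j * yh i) ^ 2) ≤
      Real.sqrt n *
        ((∑ i, C i * xs i) + (∑ i, cb i * ys i)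
          + Real.sqrt (∑ j, (∑ i, A i j * ys i) ^ 2)) := by
  refine ⟨fun y => ⟨?_, sqrt_sum_sq_le_sum_abs _⟩, ?_⟩
  · simpa using one_div_sqrt_card_mul_sum_abs_le_sqrt_sum_sq fun j => ∑ i, A i j * y i
  rcases Nat.eq_zero_or_pos n with rfl | hn
  · simp
  have hsqrt : 1 ≤ √(n : ℝ) := Real.one_le_sqrt.mpr (by exact_mod_cast hn)
  have hlin : 0 ≤ (∑ i, C i * xs i) + (∑ i, cb i * ys i) :=
    add_nonneg (Finset.sum_nonneg fun i _ => mul_nonneg (hC i) (hZnn _ hmem2 i).1)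
      (Finset.sum_nonneg fun i _ => mul_nonneg (hcb i) (hZnn _ hmem2 i).2)
  have hl2_le_l1 := sqrt_sum_sq_le_sum_abs fun j => ∑ i, A i j * yh i
  have hl1_le_l2 : ∑ j, |∑ i, A i j * ys i| ≤ √(n : ℝ) * √(∑ j, (∑ i, A i j * ys i) ^ 2) := by
    simpa using sum_abs_le_sqrt_card_mul_sqrt_sum_sq fun j => ∑ i, A i j * ys i
  -- ℓ₂ ≤ ℓ₁ at ŷ, optimality of (x̂, ŷ) for ℓ₁, ℓ₁ ≤ √n·ℓ₂ at y*, and √n ≥ 1 on the nonnegative linear part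
  have hopt := hopt1 _ hmem2
  have hscale := le_mul_of_one_le_left hlin hsqrt
  rw [mul_add]
  linarith

/-- Norm comparison `(1/√n)·‖Aᵀy‖₁ ≤ ‖Aᵀy‖₂ ≤ ‖Aᵀy‖₁`, and the resulting
`√n`-approximation: if `(x̂, ŷ)` minimizes the ℓ₁-objective over `Z` and
`(x*, y*)` minimizes the ℓ₂-objective over `Z`, then the ℓ₂-value of
`(x̂, ŷ)` is at most `√n` times the optimum. -/
theorem stmt6 (n : ℕ) (A : Fin n → Fin n → ℝ) (C cb : Fin n → ℝ)
    (Z : Set ((Fin n → ℝ) × (Fin n → ℝ)))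
    (hC : ∀ i, 0 ≤ C i) (hcb : ∀ i, 0 ≤ cb i)
    (hZnn : ∀ p ∈ Z, ∀ i, 0 ≤ p.1 i ∧ 0 ≤ p.2 i)
    (xh yh xs ys : Fin n → ℝ)
    (hmem1 : (xh, yh) ∈ Z) (hmem2 : (xs, ys) ∈ Z)
    (hopt1 : ∀ p ∈ Z,
      (∑ i, C i * xh i) + (∑ i, cb i * yh i) + (∑ j, |∑ i, A i j * yh i|) ≤
        (∑ i, C i * p.1 i) + (∑ i, cb i * p.2 i) + (∑ j, |∑ i, A i j * p.2 i|))
    (hopt2 : ∀ p ∈ Z,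
      (∑ i, C i * xs i) + (∑ i, cb i * ys i)
          + Real.sqrt (∑ j, (∑ i, A i j * ys i) ^ 2) ≤
        (∑ i, C i * p.1 i) + (∑ i, cb i * p.2 i)
          + Real.sqrt (∑ j, (∑ i, A i j * p.2 i) ^ 2)) :
    (∀ y : Fin n → ℝ,
      (1 / Real.sqrt n) * (∑ j, |∑ i, A i j * y i|) ≤
          Real.sqrt (∑ j, (∑ i, A i j * y i) ^ 2) ∧
        Real.sqrt (∑ j, (∑ i, A i j * y i) ^ 2) ≤ ∑ j, |∑ i, A i j * y i|) ∧
    (∑ i, C i * xh i) + (∑ i, cb i * yh i)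
        + Real.sqrt (∑ j, (∑ i, A i j * yh i) ^ 2) ≤
      Real.sqrt n *
        ((∑ i, C i * xs i) + (∑ i, cb i * ys i)
          + Real.sqrt (∑ j, (∑ i, A i j * ys i) ^ 2)) :=
  stmt6_general n A C cb Z hC hcb hZnn xh yh xs ys hmem2 hopt1
end

section
/- Consider the MIP: minimize 10x₁ + x₂ + u subject to x₁ + y₁ + x₂ + y₂ = 2, x₁ + y₁ ≤ 1, x₂ + y₂ ≤ 1, u ≥ y₁, (1/2)u ≥ y₂, x₁, x₂ ∈ {0,1}, y₁, y₂ ∈ [0,1], u ≥ 0. Its optimal value is 2 (attained at y₁ = x₂ = 1, u = 1), while its LP relaxation (with x₁, x₂ ∈ [0,1]) has optimal value 3/2 (attained at y₁ = u = 1, x₂ = y₂ = 1/2). Hence the integrality gap is at least 4/3. -/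
/-! The constraints force `x₁ + y₁ = x₂ + y₂ = 1`. Halving `u ≥ y₁` and `u ≥ 2y₂` and adding
gives `u ≥ 3/2 - x₁/2 - x₂`, so every LP-feasible point costs at least `3/2 + 19x₁/2`; this
LP dual bound is attained at `x = (0, 1/2)`. With integral `x`, either `x₁ = 1` (cost `≥ 10`) or
`y₁ = 1`, hence `u ≥ 1`, and `x₂ = 0` forces `y₂ = 1`, hence `u ≥ 2`: the cost is at least `2`. -/

/-- Core (LP) constraints of the 4/3-integrality-gap selection instance. -/
def FeasSel9 (x1 x2 y1 y2 u : ℝ) : Prop :=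
  x1 + y1 + x2 + y2 = 2 ∧ x1 + y1 ≤ 1 ∧ x2 + y2 ≤ 1 ∧
  0 ≤ y1 ∧ y1 ≤ 1 ∧ 0 ≤ y2 ∧ y2 ≤ 1 ∧ 0 ≤ u ∧
  y1 ≤ u ∧ y2 ≤ (1 / 2) * u

namespace FeasSel9

variable {x1 x2 y1 y2 u : ℝ}

theorem three_halves_le_cost (h : FeasSel9 x1 x2 y1 y2 u) (hx1 : 0 ≤ x1) :
    3 / 2 ≤ 10 * x1 + x2 + u := by
  obtain ⟨hsum, hcap1, -, -, -, -, -, -, hu1, hu2⟩ := h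
  linarith

theorem two_le_cost (h : FeasSel9 x1 x2 y1 y2 u) (hx1 : x1 = 0 ∨ x1 = 1)
    (hx2 : x2 = 0 ∨ x2 = 1) : 2 ≤ 10 * x1 + x2 + u := by
  obtain ⟨hsum, -, hcap2, -, hy1, -, -, hu, hu1, hu2⟩ := h
  rcases hx1 with rfl | rfl <;> rcases hx2 with rfl | rfl <;> linarith

end FeasSel9

theorem feasSel9_integral_optimum : FeasSel9 0 1 1 0 1 := by
  norm_num [FeasSel9]

theorem feasSel9_fractional_optimum : FeasSel9 0 (1 / 2) 1 (1 / 2) 1 := by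
  norm_num [FeasSel9]

/-- The MIP `min 10x₁ + x₂ + u` has optimal value `2`, its LP relaxation has
optimal value `3/2`, hence the integrality gap is at least `4/3`. -/
theorem stmt9 :
    IsLeast
      {v : ℝ | ∃ x1 x2 y1 y2 u : ℝ, FeasSel9 x1 x2 y1 y2 u ∧
        (x1 = 0 ∨ x1 = 1) ∧ (x2 = 0 ∨ x2 = 1) ∧ v = 10 * x1 + x2 + u}
      2 ∧
    IsLeast
      {v : ℝ | ∃ x1 x2 y1 y2 u : ℝ, FeasSel9 x1 x2 y1 y2 u ∧
        0 ≤ x1 ∧ x1 ≤ 1 ∧ 0 ≤ x2 ∧ x2 ≤ 1 ∧ v = 10 * x1 + x2 + u}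
      (3 / 2) ∧
    (4 / 3 : ℝ) ≤ 2 / (3 / 2) := by
  refine ⟨⟨?_, ?_⟩, ⟨?_, ?_⟩, by norm_num⟩
  · exact ⟨0, 1, 1, 0, 1, feasSel9_integral_optimum, by norm_num⟩
  · rintro v ⟨x1, x2, y1, y2, u, h, hx1, hx2, rfl⟩
    exact h.two_le_cost hx1 hx2
  · exact ⟨0, 1 / 2, 1, 1 / 2, 1, feasSel9_fractional_optimum, by norm_num⟩
  · rintro v ⟨x1, x2, y1, y2, u, h, hx1, -, -, -, rfl⟩
    exact h.three_halves_le_cost hx1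
end

section
/- Let c̲ ∈ ℝⁿ₊ with coordinates sorted nondecreasingly, let d ∈ {0, ε, 2ε, …, 1}ⁿ where ε = 1/t for a positive integer t, let C ∈ ℝⁿ₊ and p an integer with 0 ≤ p ≤ n. Consider the problem: minimize Cᵀx + c̲ᵀy subject to ∑ᵢ(xᵢ + yᵢ) = p, x + y ≤ 1, 0 ≤ yᵢ ≤ dᵢ, x ∈ {0,1}ⁿ. If this problem is feasible, then it has an optimal solution in which yᵢ ∈ {0, ε, 2ε, …, 1} for every i. -/
/-!
For fixed `x`, the `y`-part is a fractional filling problem with nondecreasing costs, and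
filling the cheapest coordinates first is optimal by summation by parts: the partial sums of the
greedy filling dominate those of any other filling. Measured in units of `ε`, the total
`p - ∑ xᵢ` and the capacities `dᵢ` (or `0` where `xᵢ = 1`) are integers, so the greedy filling
lies on the grid. Hence every feasible point is dominated by one of the finitely many feasible
grid points, and the cheapest of those is optimal.
-/

open Finset

/-- Feasibility for the discretized selection subproblem: `x` binary,
`∑(xᵢ+yᵢ) = p`, `x + y ≤ 1`, `0 ≤ y ≤ d`. -/
def Feas10 (n : ℕ) (d : Fin n → ℝ) (p : ℕ) (x y : Fin n → ℝ) : Prop :=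
  (∀ i, x i = 0 ∨ x i = 1) ∧
  (∑ i, (x i + y i)) = (p : ℝ) ∧
  (∀ i, x i + y i ≤ 1) ∧
  (∀ i, 0 ≤ y i ∧ y i ≤ d i)

theorem sum_range_mul_nonpos_of_monotoneOn {c d : ℕ → ℝ} {n : ℕ}
    (hc : MonotoneOn c (Set.Iio n)) (hd : ∀ m ≤ n, 0 ≤ ∑ i ∈ range m, d i)
    (hdn : ∑ i ∈ range n, d i = 0) :
    ∑ i ∈ range n, c i * d i ≤ 0 := by
  have hby_parts := sum_range_by_parts c d n
  simp only [smul_eq_mul, hdn, mul_zero, zero_sub] at hby_parts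
  rw [hby_parts, neg_nonpos]
  refine sum_nonneg fun i hi => mul_nonneg (sub_nonneg.2 ?_) (hd _ ?_)
  all_goals simp only [mem_range] at hi
  · exact hc (Set.mem_Iio.2 (by omega)) (Set.mem_Iio.2 (by omega)) (by omega)
  · omega

/-- The amount put into slot `i` when the capacities `u 0, u 1, …` are filled in order up to a
total of `N`. -/
def greedyFill (u : ℕ → ℕ) (N i : ℕ) : ℕ :=
  min N (∑ j ∈ range (i + 1), u j) - min N (∑ j ∈ range i, u j)

theorem greedyFill_le (u : ℕ → ℕ) (N i : ℕ) : greedyFill u N i ≤ u i := by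
  unfold greedyFill
  rw [sum_range_succ]
  omega

theorem sum_range_greedyFill (u : ℕ → ℕ) (N m : ℕ) :
    ∑ i ∈ range m, greedyFill u N i = min N (∑ j ∈ range m, u j) := by
  induction m with
  | zero => simp
  | succ m ih =>
    rw [sum_range_succ, ih, greedyFill, sum_range_succ]
    omega

theorem natCast_le_sum_range_of_le {a : ℕ → ℝ} {u : ℕ → ℕ} {n N : ℕ}
    (hau : ∀ i < n, a i ≤ u i) (hsum : ∑ i ∈ range n, a i = N) :
    N ≤ ∑ i ∈ range n, u i := by
  have : (N : ℝ) ≤ ∑ i ∈ range n, (u i : ℝ) :=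
    hsum ▸ sum_le_sum fun i hi => hau i (mem_range.1 hi)
  exact_mod_cast this

theorem sum_range_mul_greedyFill_le {c a : ℕ → ℝ} {u : ℕ → ℕ} {n N : ℕ}
    (hc : MonotoneOn c (Set.Iio n)) (ha : ∀ i < n, 0 ≤ a i) (hau : ∀ i < n, a i ≤ u i)
    (hsum : ∑ i ∈ range n, a i = N) :
    ∑ i ∈ range n, c i * greedyFill u N i ≤ ∑ i ∈ range n, c i * a i := by
  have hpartial : ∀ m, ∑ i ∈ range m, ((greedyFill u N i : ℝ) - a i)
      = min (N : ℝ) (∑ j ∈ range m, (u j : ℝ)) - ∑ i ∈ range m, a i := by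
    intro m
    rw [sum_sub_distrib, ← Nat.cast_sum, sum_range_greedyFill, Nat.cast_min, Nat.cast_sum]
  have hN : (N : ℝ) ≤ ∑ j ∈ range n, (u j : ℝ) := by
    exact_mod_cast natCast_le_sum_range_of_le hau hsum
  have hcost := sum_range_mul_nonpos_of_monotoneOn (d := fun i => (greedyFill u N i : ℝ) - a i) hc
    (fun m hm => by
      rw [hpartial, sub_nonneg]
      refine le_min ?_ ?_
      · rw [← hsum]
        exact sum_le_sum_of_subset_of_nonneg (range_mono hm)
          fun i hi _ => ha i (mem_range.1 hi)
      · exact sum_le_sum fun i hi => hau i ((mem_range.1 hi).trans_le hm))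
    (by rw [hpartial, min_eq_left hN, hsum, sub_self])
  simpa only [mul_sub, sum_sub_distrib, sub_nonpos] using hcost

section ExtendByZero

variable {α : Type*} [Zero α] {n : ℕ}

def extendByZero (f : Fin n → α) (i : ℕ) : α :=
  if h : i < n then f ⟨i, h⟩ else 0

@[simp]
theorem extendByZero_val (f : Fin n → α) (i : Fin n) : extendByZero f i = f i :=
  dif_pos i.isLt

theorem extendByZero_of_lt (f : Fin n → α) {i : ℕ} (hi : i < n) :
    extendByZero f i = f ⟨i, hi⟩ :=
  dif_pos hi

end ExtendByZero

theorem exists_nat_le_sum_eq_sum_mul_le {n N : ℕ} {c a : Fin n → ℝ} {u : Fin n → ℕ}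
    (hc : Monotone c) (ha : ∀ i, 0 ≤ a i) (hau : ∀ i, a i ≤ u i) (hsum : ∑ i, a i = N) :
    ∃ g : Fin n → ℕ, (∀ i, g i ≤ u i) ∧ ∑ i, g i = N ∧
      ∑ i, c i * g i ≤ ∑ i, c i * a i := by
  have hc' : MonotoneOn (extendByZero c) (Set.Iio n) := fun i hi j hj hij => by
    rw [extendByZero_of_lt c hi, extendByZero_of_lt c hj]
    exact hc (Fin.mk_le_mk.2 hij)
  have ha' : ∀ i < n, 0 ≤ extendByZero a i := fun i hi => by
    rw [extendByZero_of_lt a hi]; exact ha _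
  have hau' : ∀ i < n, extendByZero a i ≤ extendByZero u i := fun i hi => by
    rw [extendByZero_of_lt a hi, extendByZero_of_lt u hi]; exact hau _
  have hsum' : ∑ i ∈ range n, extendByZero a i = N := by
    rw [← Fin.sum_univ_eq_sum_range]; simpa using hsum
  refine ⟨fun i => greedyFill (extendByZero u) N i, fun i => ?_, ?_, ?_⟩
  · simpa using greedyFill_le (extendByZero u) N i
  · rw [Fin.sum_univ_eq_sum_range (greedyFill (extendByZero u) N), sum_range_greedyFill,
      min_eq_left (natCast_le_sum_range_of_le hau' hsum')]
  · have hcost := sum_range_mul_greedyFill_le hc' ha' hau' hsum'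
    rw [← Fin.sum_univ_eq_sum_range (fun i => extendByZero c i * (greedyFill _ N i : ℝ)),
      ← Fin.sum_univ_eq_sum_range (fun i => extendByZero c i * extendByZero a i)] at hcost
    simpa using hcost

theorem exists_sum_eq_natCast_of_forall_eq_zero_or_eq_one {ι : Type*} [Fintype ι] {x : ι → ℝ}
    (hx : ∀ i, x i = 0 ∨ x i = 1) : ∃ M : ℕ, ∑ i, x i = M := by
  classical
  refine ⟨#{i | x i = 1}, ?_⟩
  rw [← sum_boole]
  exact sum_congr rfl fun i _ => by rcases hx i with h | h <;> simp [h]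

def OnGrid {n : ℕ} (t : ℕ) (ε : ℝ) (y : Fin n → ℝ) : Prop :=
  ∀ i, ∃ k : ℕ, k ≤ t ∧ y i = (k : ℝ) * ε

theorem Feas10.exists_onGrid_sum_mul_le {n t p : ℕ} {ε : ℝ} {cb d x y' : Fin n → ℝ}
    (htε : (t : ℝ) * ε = 1) (hcb : Monotone cb) (hd : OnGrid t ε d) (h : Feas10 n d p x y') :
    ∃ y, Feas10 n d p x y ∧ OnGrid t ε y ∧ ∑ i, cb i * y i ≤ ∑ i, cb i * y' i := by
  obtain ⟨hx, hsum, hle, hy'⟩ := h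
  choose k hkt hkd using hd
  have hε : 0 < ε := pos_of_mul_pos_right (htε ▸ one_pos) (Nat.cast_nonneg t)
  obtain ⟨M, hM⟩ := exists_sum_eq_natCast_of_forall_eq_zero_or_eq_one hx
  have hsum_y' : ∑ i, y' i = p - M := by
    rw [← hM, ← hsum, sum_add_distrib]; ring
  have hMp : M ≤ p := by
    have : (M : ℝ) ≤ p := by
      linarith [sum_nonneg fun i (_ : i ∈ univ) => (hy' i).1]
    exact_mod_cast this
  set u : Fin n → ℕ := fun i => if x i = 1 then 0 else k i with hu
  have huk : ∀ i, u i ≤ k i := fun i => by simp only [hu]; split <;> omega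
  obtain ⟨g, hgu, hgsum, hgcost⟩ := exists_nat_le_sum_eq_sum_mul_le (N := (p - M) * t)
    (a := fun i => y' i * t) (u := u) hcb
    (fun i => mul_nonneg (hy' i).1 (Nat.cast_nonneg t))
    (fun i => by
      rcases hx i with h0 | h1
      · simp only [hu, h0, zero_ne_one, if_false]
        calc y' i * t ≤ k i * ε * t := by gcongr; exact (hkd i ▸ (hy' i).2)
          _ = k i := by rw [mul_assoc, mul_comm ε, htε, mul_one]
      · simp only [hu, h1, if_true, Nat.cast_zero]
        nlinarith [hle i, (Nat.cast_nonneg t : (0 : ℝ) ≤ t)])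
    (by rw [← sum_mul, hsum_y']; push_cast [Nat.cast_sub hMp]; ring)
  refine ⟨fun i => g i * ε, ⟨hx, ?_, fun i => ?_, fun i => ⟨by positivity, ?_⟩⟩,
    fun i => ⟨g i, (hgu i).trans ((huk i).trans (hkt i)), rfl⟩, ?_⟩
  · rw [sum_add_distrib, hM, ← sum_mul, ← Nat.cast_sum, hgsum]
    push_cast [Nat.cast_sub hMp]
    rw [mul_assoc, htε]; ring
  · show x i + g i * ε ≤ 1
    rcases hx i with h0 | h1
    · rw [h0, zero_add, ← htε]
      gcongr
      exact_mod_cast (hgu i).trans ((huk i).trans (hkt i))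
    · have : g i = 0 := by simpa [hu, h1] using hgu i
      simp [h1, this]
  · show g i * ε ≤ d i
    rw [hkd i]
    gcongr
    exact_mod_cast (hgu i).trans (huk i)
  · calc ∑ i, cb i * (g i * ε) = ε * ∑ i, cb i * g i := by
          rw [mul_sum]; exact sum_congr rfl fun i _ => by ring
      _ ≤ ε * ∑ i, cb i * (y' i * t) := by gcongr
      _ = ∑ i, cb i * y' i := by
          rw [mul_sum]; exact sum_congr rfl fun i _ => by linear_combination cb i * y' i * htε

theorem finite_setOf_binary_onGrid (n t : ℕ) (ε : ℝ) :
    {q : (Fin n → ℝ) × (Fin n → ℝ) | (∀ i, q.1 i = 0 ∨ q.1 i = 1) ∧ OnGrid t ε q.2}.Finite := by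
  refine ((Set.Finite.pi fun _ => Set.toFinite {0, 1}).prod
    (Set.Finite.pi fun _ => (Set.finite_Iic t).image fun k : ℕ => (k : ℝ) * ε)).subset ?_
  rintro ⟨x, y⟩ ⟨hx, hy⟩
  refine ⟨fun i _ => by simpa using hx i, fun i _ => ?_⟩
  obtain ⟨k, hk, hyk⟩ := hy i
  exact ⟨k, hk, hyk.symm⟩

theorem exists_forall_le_of_finite_of_forall_exists_le {α β : Type*} [LinearOrder β]
    {f : α → β} {F S : Set α} (hS : S.Finite) (hF : F.Nonempty)
    (hdom : ∀ a ∈ F, ∃ b ∈ S, f b ≤ f a) : ∃ b ∈ S, ∀ a ∈ F, f b ≤ f a := by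
  obtain ⟨a₀, ha₀⟩ := hF
  obtain ⟨b₀, hb₀, -⟩ := hdom a₀ ha₀
  obtain ⟨b, hb, hmin⟩ := S.exists_min_image f hS ⟨b₀, hb₀⟩
  refine ⟨b, hb, fun a ha => ?_⟩
  obtain ⟨b', hb', hle⟩ := hdom a ha
  exact (hmin b' hb').trans hle

theorem stmt10_general (n t : ℕ) (ht : 1 ≤ t) (ε : ℝ) (hε : ε = 1 / (t : ℝ))
    (C cb d : Fin n → ℝ)
    (hsort : ∀ i j : Fin n, i ≤ j → cb i ≤ cb j)
    (hd : ∀ i, ∃ k : ℕ, k ≤ t ∧ d i = (k : ℝ) * ε)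
    (p : ℕ)
    (hfeas : ∃ x y : Fin n → ℝ, Feas10 n d p x y) :
    ∃ x y : Fin n → ℝ, Feas10 n d p x y ∧
      (∀ x' y' : Fin n → ℝ, Feas10 n d p x' y' →
        (∑ i, (C i * x i + cb i * y i)) ≤ ∑ i, (C i * x' i + cb i * y' i)) ∧
      ∀ i, ∃ k : ℕ, k ≤ t ∧ y i = (k : ℝ) * ε := by
  have htε : (t : ℝ) * ε = 1 := by
    rw [hε, mul_one_div_cancel (by exact_mod_cast (by omega : t ≠ 0))]
  obtain ⟨⟨x, y⟩, ⟨hxy, hgrid⟩, hopt⟩ := exists_forall_le_of_finite_of_forall_exists_le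
    (f := fun q => ∑ i, (C i * q.1 i + cb i * q.2 i))
    (F := {q : (Fin n → ℝ) × (Fin n → ℝ) | Feas10 n d p q.1 q.2})
    (S := {q | Feas10 n d p q.1 q.2 ∧ OnGrid t ε q.2})
    ((finite_setOf_binary_onGrid n t ε).subset fun q hq => ⟨hq.1.1, hq.2⟩)
    (let ⟨x₀, y₀, h₀⟩ := hfeas; ⟨(x₀, y₀), h₀⟩)
    (fun ⟨x', y'⟩ h => by
      obtain ⟨y, hxy, hgrid, hcost⟩ := h.exists_onGrid_sum_mul_le htε hsort hd
      refine ⟨(x', y), ⟨hxy, hgrid⟩, ?_⟩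
      simpa only [sum_add_distrib] using add_le_add_right hcost _)
  exact ⟨x, y, hxy, fun x' y' h => hopt (x', y') h, hgrid⟩

/-- Discretization property: if the problem is feasible, it has an optimal
solution in which every `yᵢ` is a multiple of `ε` in `{0, ε, 2ε, …, 1}`. -/
theorem stmt10 (n t : ℕ) (ht : 1 ≤ t) (ε : ℝ) (hε : ε = 1 / (t : ℝ))
    (C cb d : Fin n → ℝ)
    (hC : ∀ i, 0 ≤ C i) (hcb : ∀ i, 0 ≤ cb i)
    (hsort : ∀ i j : Fin n, i ≤ j → cb i ≤ cb j)
    (hd : ∀ i, ∃ k : ℕ, k ≤ t ∧ d i = (k : ℝ) * ε)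
    (p : ℕ) (hp : p ≤ n)
    (hfeas : ∃ x y : Fin n → ℝ, Feas10 n d p x y) :
    ∃ x y : Fin n → ℝ, Feas10 n d p x y ∧
      (∀ x' y' : Fin n → ℝ, Feas10 n d p x' y' →
        (∑ i, (C i * x i + cb i * y i)) ≤ ∑ i, (C i * x' i + cb i * y' i)) ∧
      ∀ i, ∃ k : ℕ, k ≤ t ∧ y i = (k : ℝ) * ε :=
  stmt10_general n t ht ε hε C cb d hsort hd p hfeas
end

section
/- Let H ∈ ℝᵐˣⁿ, g ∈ ℝᵐ, and suppose the polyhedron N = {x ∈ ℝⁿ : Hx ≥ g, 0 ≤ x ≤ 1} is integral. Let U ⊂ ℝⁿ₊ be a nonempty compact convex set and x ∈ {0,1}ⁿ with R(x) = {y ∈ {0,1}ⁿ : x + y ∈ N} nonempty. Then max_{c∈U} min_{y∈R(x)} cᵀy = min_{y ∈ P(x)} max_{c∈U} cᵀy, where P(x) = {y ∈ ℝⁿ : H(x+y) ≥ g, 0 ≤ y ≤ 1 − x}. -/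
/-!
Fixing the coordinates with `x j = 1` to one cuts a face out of `N`, and a face of a set with
binary minimizers again has binary minimizers: a large penalty on leaving the face turns
minimization over the face into minimization over `N`. Hence, for every cost `c`, the binary
minimum over `R(x)` equals the minimum over the polytope `P(x)`, and the claim becomes the minimax
equality for the bilinear form `c ⬝ᵥ y` on `U × P(x)`. For that, compactness of `P(x)` reduces the
problem to finitely many costs `c ∈ U`; separating the image of `P(x)` in `ℝ^k` from the orthant
below the value gives weights whose convex combination of those costs lies in `U` and beats that
value at every point of `P(x)`.
-/

/-- The polyhedron `N = {x : Hx ≥ g, 0 ≤ x ≤ 1}`. -/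
def NSet (n m : ℕ) (H : Fin m → Fin n → ℝ) (g : Fin m → ℝ) : Set (Fin n → ℝ) :=
  {x | (∀ i, g i ≤ ∑ j, H i j * x j) ∧ ∀ j, 0 ≤ x j ∧ x j ≤ 1}

theorem sSup_image_eq_sInf_image {α β : Type*} {A : Set α} {B : Set β} {φ : α → ℝ} {ψ : β → ℝ}
    (hA : A.Nonempty) (hB : B.Nonempty) (hle : ∀ a ∈ A, ∀ b ∈ B, φ a ≤ ψ b)
    (hbound : ∀ t, (∀ a ∈ A, φ a ≤ t) → ∃ b ∈ B, ψ b ≤ t) :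
    sSup (φ '' A) = sInf (ψ '' B) := by
  obtain ⟨a₀, ha₀⟩ := hA
  obtain ⟨b₀, hb₀⟩ := hB
  have hbdd : BddAbove (φ '' A) := ⟨ψ b₀, Set.forall_mem_image.2 fun a ha => hle a ha b₀ hb₀⟩
  obtain ⟨b, hb, hψb⟩ := hbound _ fun a ha => le_csSup hbdd (Set.mem_image_of_mem φ ha)
  refine le_antisymm ?_ ?_
  · refine le_csInf ⟨_, b₀, hb₀, rfl⟩ (Set.forall_mem_image.2 fun b hb => ?_)
    exact csSup_le ⟨_, a₀, ha₀, rfl⟩ (Set.forall_mem_image.2 fun a ha => hle a ha b hb)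
  · refine (csInf_le ⟨φ a₀, Set.forall_mem_image.2 fun b hb => hle a₀ ha₀ b hb⟩ ?_).trans hψb
    exact Set.mem_image_of_mem ψ hb

theorem exists_mem_stdSimplex_forall_lt_dotProduct {κ : Type*} [Fintype κ] {K : Set (κ → ℝ)}
    (hKconv : Convex ℝ K) (hKc : IsCompact K) (hKne : K.Nonempty) {t : ℝ}
    (hK : ∀ z ∈ K, ∃ k, t < z k) :
    ∃ μ ∈ stdSimplex ℝ κ, ∀ z ∈ K, t < μ ⬝ᵥ z := by
  classical
  set O : Set (κ → ℝ) := Set.Iic fun _ => t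
  have hdisj : Disjoint O K := Set.disjoint_right.2 fun z hz hzO =>
    let ⟨k, hk⟩ := hK z hz; (hzO k).not_gt hk
  obtain ⟨f, u, v, hfO, huv, hfK⟩ :=
    geometric_hahn_banach_closed_compact (convex_Iic _) isClosed_Iic hKconv hKc hdisj
  set e : κ → κ → ℝ := fun k j => if k = j then 1 else 0
  set w : κ → ℝ := fun k => f (e k)
  have hf : ∀ z, f z = w ⬝ᵥ z := fun z => by
    rw [← f.coe_coe, LinearMap.pi_apply_eq_sum_univ]
    exact Finset.sum_congr rfl fun k _ => mul_comm _ _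
  have htO : (fun _ => t) ∈ O := Set.mem_Iic.2 le_rfl
  -- `O` is invariant under decreasing a coordinate, so `f` bounded above on `O` forces `w ≥ 0`
  have hw : ∀ k, 0 ≤ w k := by
    intro k
    by_contra! hk
    set s := (u - f fun _ => t) / -w k
    have hs : 0 < s := div_pos (sub_pos.2 (hfO _ htO)) (neg_pos.2 hk)
    have hmem : (fun _ => t) - s • e k ∈ O := fun j => by
      have : 0 ≤ e k j := by simp only [e]; split_ifs <;> norm_num
      simp only [Pi.sub_apply, Pi.smul_apply, smul_eq_mul]
      nlinarith
    have := hfO _ hmem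
    rw [map_sub, map_smul, smul_eq_mul] at this
    have : s * w k = -(u - f fun _ => t) := by
      simp only [s]; field_simp [hk.ne]
    linarith
  obtain ⟨z₀, hz₀⟩ := hKne
  have hwt : ∀ z ∈ K, w ⬝ᵥ (fun _ => t) < w ⬝ᵥ z := fun z hz => by
    rw [← hf, ← hf]; linarith [hfO _ htO, hfK z hz]
  have hS : 0 < ∑ k, w k := by
    refine (Finset.sum_nonneg fun k _ => hw k).lt_of_ne fun h => ?_
    have hw0 : w = 0 := funext fun k =>
      (Finset.sum_eq_zero_iff_of_nonneg fun k _ => hw k).1 h.symm k (Finset.mem_univ k)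
    simpa [hw0] using hwt z₀ hz₀
  refine ⟨(∑ k, w k)⁻¹ • w, ⟨fun k => mul_nonneg (inv_nonneg.2 hS.le) (hw k), ?_⟩,
    fun z hz => ?_⟩
  · simp [← Finset.mul_sum, hS.ne']
  · have h := hwt z hz
    rw [smul_dotProduct, smul_eq_mul, lt_inv_mul_iff₀ hS]
    simpa [dotProduct, Finset.mul_sum, mul_comm] using h

theorem exists_forall_dotProduct_le_of_forall_exists {ι : Type*} [Fintype ι]
    {U P : Set (ι → ℝ)} (hU : Convex ℝ U) (hP : Convex ℝ P) (hPc : IsCompact P)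
    (hPne : P.Nonempty) {t : ℝ} (h : ∀ c ∈ U, ∃ y ∈ P, c ⬝ᵥ y ≤ t) :
    ∃ y ∈ P, ∀ c ∈ U, c ⬝ᵥ y ≤ t := by
  suffices hfin : ∀ s : Finset U, (P ∩ ⋂ c ∈ s, {y | (c : ι → ℝ) ⬝ᵥ y ≤ t}).Nonempty by
    obtain ⟨y, hyP, hy⟩ := hPc.inter_iInter_nonempty _
      (fun c => isClosed_le (by fun_prop) continuous_const) hfin
    exact ⟨y, hyP, fun c hc => Set.mem_iInter.1 hy ⟨c, hc⟩⟩
  intro s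
  by_contra hs
  let L : (ι → ℝ) →ₗ[ℝ] (s → ℝ) := Matrix.mulVecLin fun c : s => ((c : U) : ι → ℝ)
  have hL : ∀ z ∈ L '' P, ∃ c, t < z c := by
    rintro _ ⟨y, hy, rfl⟩
    by_contra! hle
    exact hs ⟨y, hy, Set.mem_iInter₂.2 fun c hc => hle ⟨c, hc⟩⟩
  obtain ⟨μ, hμ, hμL⟩ := exists_mem_stdSimplex_forall_lt_dotProduct (hP.linear_image L)
    (hPc.image L.continuous_of_finiteDimensional) (hPne.image L) hL
  obtain ⟨y, hyP, hy⟩ := h (∑ c : s, μ c • ((c : U) : ι → ℝ))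
    (hU.sum_mem (fun c _ => hμ.1 c) hμ.2 fun c _ => (c : U).2)
  have : μ ⬝ᵥ L y = (∑ c : s, μ c • ((c : U) : ι → ℝ)) ⬝ᵥ y := by
    simp only [sum_dotProduct, smul_dotProduct, smul_eq_mul]
    rfl
  linarith [hμL _ ⟨y, hyP, rfl⟩]

section BinaryMinimizers

variable {ι : Type*} [Fintype ι]

def HasBinaryMinimizers (N : Set (ι → ℝ)) : Prop :=
  ∀ c : ι → ℝ, ∃ z ∈ N, (∀ j, z j = 0 ∨ z j = 1) ∧ ∀ z' ∈ N, c ⬝ᵥ z ≤ c ⬝ᵥ z'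

theorem dotProduct_sub_dotProduct_le_sum_abs (c : ι → ℝ) {z w : ι → ℝ}
    (hz : ∀ j, 0 ≤ z j ∧ z j ≤ 1) (hw : ∀ j, 0 ≤ w j ∧ w j ≤ 1) :
    c ⬝ᵥ w - c ⬝ᵥ z ≤ ∑ j, |c j| := by
  rw [← dotProduct_sub]
  refine Finset.sum_le_sum fun j _ => ?_
  have hwz : |w j - z j| ≤ 1 := abs_le.2 ⟨by linarith [hz j, hw j], by linarith [hz j, hw j]⟩
  calc c j * (w j - z j) ≤ |c j| * |w j - z j| := by
        rw [← abs_mul]; exact le_abs_self _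
    _ ≤ |c j| := mul_le_of_le_one_right (abs_nonneg _) hwz

theorem HasBinaryMinimizers.inter_eq_one {N : Set (ι → ℝ)} (hN : HasBinaryMinimizers N)
    (hbox : ∀ z ∈ N, ∀ j, 0 ≤ z j ∧ z j ≤ 1) (S : Finset ι)
    (hne : (N ∩ {z | ∀ j ∈ S, z j = 1}).Nonempty) :
    HasBinaryMinimizers (N ∩ {z | ∀ j ∈ S, z j = 1}) := by
  classical
  intro c
  obtain ⟨w, hwN, hwS⟩ := hne
  set d : ι → ℝ := fun j => if j ∈ S then 1 else 0
  have hd : ∀ z, d ⬝ᵥ z = ∑ j ∈ S, z j := fun z => by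
    simp [d, dotProduct, ite_mul, Finset.sum_ite_mem]
  -- a penalty larger than any variation of `c` on the cube forces the minimizer onto the face
  set M : ℝ := ∑ j, |c j| + 1 with hM
  obtain ⟨z, hzN, hzbin, hzmin⟩ := hN (c - M • d)
  have hmin : ∀ z' ∈ N, c ⬝ᵥ z - M * d ⬝ᵥ z ≤ c ⬝ᵥ z' - M * d ⬝ᵥ z' :=
    fun z' hz' => by simpa [sub_dotProduct, smul_dotProduct] using hzmin z' hz'
  have hzS : ∀ j ∈ S, z j = 1 := by
    by_contra! ⟨j₀, hj₀, hzj₀⟩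
    have hgap : d ⬝ᵥ z + 1 ≤ d ⬝ᵥ w := by
      have h := Finset.single_le_sum (f := fun j => w j - z j)
        (fun j hj => sub_nonneg.2 ((hbox z hzN j).2.trans_eq (hwS j hj).symm)) hj₀
      rw [Finset.sum_sub_distrib, hwS j₀ hj₀, (hzbin j₀).resolve_right hzj₀] at h
      rw [hd, hd]
      linarith
    have hpen := mul_le_mul_of_nonneg_left hgap (by positivity : 0 ≤ M)
    linarith [hM, dotProduct_sub_dotProduct_le_sum_abs c (hbox z hzN) (hbox w hwN), hmin w hwN]
  refine ⟨z, ⟨hzN, hzS⟩, hzbin, fun z' ⟨hz'N, hz'S⟩ => ?_⟩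
  have hdz : d ⬝ᵥ z = d ⬝ᵥ z' := by
    rw [hd, hd]; exact Finset.sum_congr rfl fun j hj => (hzS j hj).trans (hz'S j hj).symm
  have h := hmin z' hz'N
  rw [hdz] at h
  linarith

end BinaryMinimizers

section Recourse

variable (n m : ℕ) (H : Fin m → Fin n → ℝ) (g : Fin m → ℝ) (x : Fin n → ℝ)

def recourseSet : Set (Fin n → ℝ) :=
  {y | (∀ j, y j = 0 ∨ y j = 1) ∧ (fun j => x j + y j) ∈ NSet n m H g}

def relaxedRecourseSet : Set (Fin n → ℝ) :=
  {y | (∀ i, g i ≤ ∑ j, H i j * (x j + y j)) ∧ ∀ j, 0 ≤ y j ∧ y j ≤ 1 - x j}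

theorem relaxedRecourseSet_eq :
    relaxedRecourseSet n m H g x =
      (x + ·) ⁻¹' {z | ∀ i, g i ≤ H i ⬝ᵥ z} ∩ Set.Icc 0 (1 - x) := by
  ext y
  simp [relaxedRecourseSet, Pi.le_def, forall_and, dotProduct]

theorem convex_relaxedRecourseSet : Convex ℝ (relaxedRecourseSet n m H g x) := by
  rw [relaxedRecourseSet_eq, Set.ofPred_forall]
  exact ((convex_iInter fun i => convex_halfSpace_ge (dotProductBilin ℝ ℝ (H i)).isLinear _)
    |>.translate_preimage_right x).inter (convex_Icc _ _)

theorem isCompact_relaxedRecourseSet : IsCompact (relaxedRecourseSet n m H g x) := by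
  rw [relaxedRecourseSet_eq, Set.inter_comm]
  refine isCompact_Icc.inter_right (IsClosed.preimage (by fun_prop) ?_)
  rw [Set.ofPred_forall]
  exact isClosed_iInter fun i => isClosed_le continuous_const (by fun_prop)

variable {n m H g x}

theorem recourseSet_subset_relaxedRecourseSet :
    recourseSet n m H g x ⊆ relaxedRecourseSet n m H g x := by
  rintro y ⟨hy, hN, hbox⟩
  exact ⟨hN, fun j => ⟨by rcases hy j with h | h <;> simp [h], by linarith [hbox j]⟩⟩

theorem add_mem_NSet_inter_of_mem_relaxedRecourseSet (hx : ∀ j, x j = 0 ∨ x j = 1) {y : Fin n → ℝ}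
    (hy : y ∈ relaxedRecourseSet n m H g x) :
    x + y ∈ NSet n m H g ∩ {z | ∀ j ∈ Finset.univ.filter (x · = 1), z j = 1} := by
  refine ⟨⟨hy.1, fun j => ?_⟩, fun j hj => ?_⟩
  · have hx₀ : 0 ≤ x j := by rcases hx j with h | h <;> simp [h]
    exact ⟨add_nonneg hx₀ (hy.2 j).1, show x j + y j ≤ 1 by linarith [(hy.2 j).2]⟩
  · rw [Finset.mem_filter] at hj
    have := hy.2 j
    simp only [Pi.add_apply, hj.2] at this ⊢
    linarith

theorem exists_mem_recourseSet_forall_dotProduct_le (hInt : HasBinaryMinimizers (NSet n m H g))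
    (hx : ∀ j, x j = 0 ∨ x j = 1) (hR : (recourseSet n m H g x).Nonempty) (c : Fin n → ℝ) :
    ∃ y ∈ recourseSet n m H g x, ∀ y' ∈ relaxedRecourseSet n m H g x, c ⬝ᵥ y ≤ c ⬝ᵥ y' := by
  obtain ⟨y₀, hy₀⟩ := hR
  have hface := hInt.inter_eq_one (fun z hz => hz.2) _
    ⟨_, add_mem_NSet_inter_of_mem_relaxedRecourseSet hx (recourseSet_subset_relaxedRecourseSet hy₀)⟩
  obtain ⟨z, ⟨hzN, hzS⟩, hzbin, hzmin⟩ := hface c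
  refine ⟨z - x, ⟨fun j => ?_, by simpa using hzN⟩, fun y' hy' => ?_⟩
  · rcases hx j with h | h
    · simpa [h] using hzbin j
    · simp [h, hzS j (by simp [h])]
  · have := hzmin _ (add_mem_NSet_inter_of_mem_relaxedRecourseSet hx hy')
    rw [dotProduct_add] at this
    rw [dotProduct_sub]
    linarith

theorem isLeast_image_relaxedRecourseSet_sInf_image_recourseSet
    (hInt : HasBinaryMinimizers (NSet n m H g)) (hx : ∀ j, x j = 0 ∨ x j = 1)
    (hR : (recourseSet n m H g x).Nonempty) (c : Fin n → ℝ) :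
    IsLeast ((c ⬝ᵥ ·) '' relaxedRecourseSet n m H g x)
      (sInf ((c ⬝ᵥ ·) '' recourseSet n m H g x)) := by
  obtain ⟨y, hyR, hy⟩ := exists_mem_recourseSet_forall_dotProduct_le hInt hx hR c
  have hsInf : sInf ((c ⬝ᵥ ·) '' recourseSet n m H g x) = c ⬝ᵥ y :=
    IsLeast.csInf_eq ⟨⟨y, hyR, rfl⟩, Set.forall_mem_image.2 fun y' hy' =>
      hy y' (recourseSet_subset_relaxedRecourseSet hy')⟩
  rw [hsInf]
  exact ⟨⟨y, recourseSet_subset_relaxedRecourseSet hyR, rfl⟩, Set.forall_mem_image.2 hy⟩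

end Recourse

theorem stmt11_general (n m : ℕ) (H : Fin m → Fin n → ℝ) (g : Fin m → ℝ)
    (hInt : ∀ c : Fin n → ℝ, ∃ z ∈ NSet n m H g,
      (∀ j, z j = 0 ∨ z j = 1) ∧ ∀ x ∈ NSet n m H g, (∑ j, c j * z j) ≤ ∑ j, c j * x j)
    (U : Set (Fin n → ℝ)) (hUne : U.Nonempty) (hUc : IsCompact U)
    (hUconv : Convex ℝ U)
    (x : Fin n → ℝ) (hx : ∀ j, x j = 0 ∨ x j = 1)
    (hR : ∃ y : Fin n → ℝ, (∀ j, y j = 0 ∨ y j = 1) ∧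
      (fun j => x j + y j) ∈ NSet n m H g) :
    sSup {v : ℝ | ∃ c ∈ U,
        v = sInf {w : ℝ | ∃ y : Fin n → ℝ,
          ((∀ j, y j = 0 ∨ y j = 1) ∧ (fun j => x j + y j) ∈ NSet n m H g) ∧
          w = ∑ j, c j * y j}} =
      sInf {v : ℝ | ∃ y : Fin n → ℝ,
        ((∀ i, g i ≤ ∑ j, H i j * (x j + y j)) ∧ ∀ j, 0 ≤ y j ∧ y j ≤ 1 - x j) ∧
        v = sSup {w : ℝ | ∃ c ∈ U, w = ∑ j, c j * y j}} := by
  set R := recourseSet n m H g x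
  set P := relaxedRecourseSet n m H g x
  have himage {α : Type} (s : Set α) (f : α → ℝ) : {v | ∃ a ∈ s, v = f a} = f '' s := by
    ext; simp [eq_comm]
  change sSup {v | ∃ c ∈ U, v = sInf {w | ∃ y ∈ R, w = c ⬝ᵥ y}} =
    sInf {v | ∃ y ∈ P, v = sSup {w | ∃ c ∈ U, w = c ⬝ᵥ y}}
  simp only [himage]
  obtain ⟨y₀, hy₀⟩ := hR
  have hmin := isLeast_image_relaxedRecourseSet_sInf_image_recourseSet hInt hx ⟨y₀, hy₀⟩
  have hmax (y : Fin n → ℝ) : IsGreatest ((· ⬝ᵥ y) '' U) (sSup ((· ⬝ᵥ y) '' U)) :=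
    (hUc.image (by fun_prop)).isGreatest_sSup (hUne.image _)
  refine sSup_image_eq_sInf_image hUne ⟨y₀, recourseSet_subset_relaxedRecourseSet hy₀⟩
    (fun c hc y hy => ((hmin c).2 ⟨y, hy, rfl⟩).trans ((hmax y).2 ⟨c, hc, rfl⟩)) fun t ht => ?_
  obtain ⟨y, hyP, hy⟩ := exists_forall_dotProduct_le_of_forall_exists hUconv
    (convex_relaxedRecourseSet n m H g x) (isCompact_relaxedRecourseSet n m H g x)
    ⟨y₀, recourseSet_subset_relaxedRecourseSet hy₀⟩ fun c hc => by
      obtain ⟨y, hyP, hyc⟩ := (hmin c).1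
      exact ⟨y, hyP, hyc.trans_le (ht c hc)⟩
  obtain ⟨c, hc, hcy⟩ := (hmax y).1
  exact ⟨y, hyP, hcy ▸ hy c hc⟩

/-- If `N` is integral, `U` is a nonempty compact convex set of nonnegative
cost vectors, and `x` is binary with nonempty binary recourse set
`R(x) = {y ∈ {0,1}ⁿ : x + y ∈ N}`, then
`max_{c∈U} min_{y∈R(x)} cᵀy = min_{y∈P(x)} max_{c∈U} cᵀy`
where `P(x) = {y : H(x+y) ≥ g, 0 ≤ y ≤ 1 − x}`. -/
theorem stmt11 (n m : ℕ) (H : Fin m → Fin n → ℝ) (g : Fin m → ℝ)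
    (hInt : ∀ c : Fin n → ℝ, ∃ z ∈ NSet n m H g,
      (∀ j, z j = 0 ∨ z j = 1) ∧ ∀ x ∈ NSet n m H g, (∑ j, c j * z j) ≤ ∑ j, c j * x j)
    (U : Set (Fin n → ℝ)) (hUne : U.Nonempty) (hUc : IsCompact U)
    (hUconv : Convex ℝ U) (hUnn : ∀ c ∈ U, ∀ i, 0 ≤ c i)
    (x : Fin n → ℝ) (hx : ∀ j, x j = 0 ∨ x j = 1)
    (hR : ∃ y : Fin n → ℝ, (∀ j, y j = 0 ∨ y j = 1) ∧
      (fun j => x j + y j) ∈ NSet n m H g) :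
    sSup {v : ℝ | ∃ c ∈ U,
        v = sInf {w : ℝ | ∃ y : Fin n → ℝ,
          ((∀ j, y j = 0 ∨ y j = 1) ∧ (fun j => x j + y j) ∈ NSet n m H g) ∧
          w = ∑ j, c j * y j}} =
      sInf {v : ℝ | ∃ y : Fin n → ℝ,
        ((∀ i, g i ≤ ∑ j, H i j * (x j + y j)) ∧ ∀ j, 0 ≤ y j ∧ y j ≤ 1 - x j) ∧
        v = sSup {w : ℝ | ∃ c ∈ U, w = ∑ j, c j * y j}} :=
  stmt11_general n m H g hInt U hUne hUc hUconv x hx hR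
end

section
/- Let C, c̲, d ∈ ℝⁿ₊, Γ ≥ 0, and let Z ⊆ {0,1}ⁿ × {0,1}ⁿ be nonempty. With U = {c̲ + δ : 0 ≤ δ ≤ d, ∑δᵢ ≤ Γ}, we have min_{(x,y)∈Z} max_{c∈U} (Cᵀx + cᵀy) = min_{(x,y)∈Z} (Cᵀx + c̲ᵀy + min{Γ, dᵀy}). -/
/-- Under continuous budgeted uncertainty, the min-max two-stage problem over a
set of binary pairs `Z` decomposes:
`min_{(x,y)∈Z} max_{c∈U}(Cᵀx + cᵀy) = min_{(x,y)∈Z}(Cᵀx + c̲ᵀy + min{Γ, dᵀy})`. -/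
theorem stmt14 (n : ℕ) (C cb d : Fin n → ℝ) (Γ : ℝ)
    (hC : ∀ i, 0 ≤ C i) (hcb : ∀ i, 0 ≤ cb i) (hd : ∀ i, 0 ≤ d i) (hΓ : 0 ≤ Γ)
    (Z : Set ((Fin n → ℝ) × (Fin n → ℝ))) (hZne : Z.Nonempty)
    (hZbin : ∀ p ∈ Z, ∀ i, (p.1 i = 0 ∨ p.1 i = 1) ∧ (p.2 i = 0 ∨ p.2 i = 1)) :
    sInf {v : ℝ | ∃ p ∈ Z,
        v = sSup {w : ℝ | ∃ δ : Fin n → ℝ,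
          (∀ i, 0 ≤ δ i ∧ δ i ≤ d i) ∧ (∑ i, δ i) ≤ Γ ∧
          w = (∑ i, C i * p.1 i) + ∑ i, (cb i + δ i) * p.2 i}} =
      sInf {v : ℝ | ∃ p ∈ Z,
        v = (∑ i, C i * p.1 i) + (∑ i, cb i * p.2 i) + min Γ (∑ i, d i * p.2 i)} := by
  have key : ∀ p ∈ Z, sSup {w : ℝ | ∃ δ : Fin n → ℝ,
      (∀ i, 0 ≤ δ i ∧ δ i ≤ d i) ∧ (∑ i, δ i) ≤ Γ ∧
      w = (∑ i, C i * p.1 i) + ∑ i, (cb i + δ i) * p.2 i} =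
      (∑ i, C i * p.1 i) + (∑ i, cb i * p.2 i) + min Γ (∑ i, d i * p.2 i) := by
    intro p hp
    have hy : ∀ i, p.2 i = 0 ∨ p.2 i = 1 := fun i => (hZbin p hp i).2
    have hy0 : ∀ i, 0 ≤ p.2 i := fun i => by rcases hy i with h | h <;> simp [h]
    have hy1 : ∀ i, p.2 i ≤ 1 := fun i => by rcases hy i with h | h <;> simp [h]
    set A := ∑ i, C i * p.1 i with hA
    set B := ∑ i, cb i * p.2 i with hB
    set S := ∑ i, d i * p.2 i with hS
    have hS0 : 0 ≤ S := Finset.sum_nonneg fun i _ => mul_nonneg (hd i) (hy0 i)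
    apply IsGreatest.csSup_eq
    constructor
    · -- membership: the supremum value is attained
      rcases eq_or_lt_of_le hS0 with hS' | hS'
      · -- S = 0
        refine ⟨0, fun i => ⟨le_rfl, hd i⟩, by simpa using hΓ, ?_⟩
        have hmin : min Γ S = 0 := by rw [← hS']; exact min_eq_right hΓ
        simp [hmin, hB]
      · -- S > 0
        set t := min (Γ / S) 1 with ht
        have ht0 : 0 ≤ t := le_min (div_nonneg hΓ hS0) zero_le_one
        have ht1 : t ≤ 1 := min_le_right _ _
        have htS : t * S = min Γ S := by
          rw [ht, min_mul_of_nonneg _ _ hS0, div_mul_cancel₀ _ (ne_of_gt hS'), one_mul]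
        refine ⟨fun i => t * (d i * p.2 i), fun i => ⟨mul_nonneg ht0
          (mul_nonneg (hd i) (hy0 i)), ?_⟩, ?_, ?_⟩
        · calc t * (d i * p.2 i) ≤ 1 * (d i * p.2 i) :=
                mul_le_mul_of_nonneg_right ht1 (mul_nonneg (hd i) (hy0 i))
            _ = d i * p.2 i := one_mul _
            _ ≤ d i := mul_le_of_le_one_right (hd i) (hy1 i)
        · have : (∑ i, t * (d i * p.2 i)) = t * S := by
            rw [hS, Finset.mul_sum]
          rw [this, htS]; exact min_le_left _ _
        · have hterm : ∀ i, (cb i + t * (d i * p.2 i)) * p.2 i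
              = cb i * p.2 i + t * (d i * p.2 i) := by
            intro i
            rcases hy i with h | h <;> simp [h] <;> ring
          have : (∑ i, (cb i + t * (d i * p.2 i)) * p.2 i) = B + t * S := by
            rw [Finset.sum_congr rfl (fun i _ => hterm i), Finset.sum_add_distrib,
              ← Finset.mul_sum, ← hB, ← hS]
          rw [this, htS]; ring
    · -- upper bound
      rintro w ⟨δ, hδ, hsum, rfl⟩
      have hterm : ∀ i, (cb i + δ i) * p.2 i = cb i * p.2 i + δ i * p.2 i := by
        intro i; ring
      rw [Finset.sum_congr rfl (fun i _ => hterm i), Finset.sum_add_distrib, ← hB]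
      have h1 : (∑ i, δ i * p.2 i) ≤ Γ := by
        refine le_trans (Finset.sum_le_sum fun i _ => ?_) hsum
        rcases hy i with h | h <;> simp [h, (hδ i).1]
      have h2 : (∑ i, δ i * p.2 i) ≤ S := by
        refine Finset.sum_le_sum fun i _ => ?_
        exact mul_le_mul_of_nonneg_right (hδ i).2 (hy0 i)
      have : (∑ i, δ i * p.2 i) ≤ min Γ S := le_min h1 h2
      linarith
  have hsets : {v : ℝ | ∃ p ∈ Z,
      v = sSup {w : ℝ | ∃ δ : Fin n → ℝ,
        (∀ i, 0 ≤ δ i ∧ δ i ≤ d i) ∧ (∑ i, δ i) ≤ Γ ∧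
        w = (∑ i, C i * p.1 i) + ∑ i, (cb i + δ i) * p.2 i}} =
      {v : ℝ | ∃ p ∈ Z,
        v = (∑ i, C i * p.1 i) + (∑ i, cb i * p.2 i) + min Γ (∑ i, d i * p.2 i)} := by
    ext v
    constructor
    · rintro ⟨p, hp, rfl⟩; exact ⟨p, hp, (key p hp).symm ▸ rfl⟩
    · rintro ⟨p, hp, rfl⟩; exact ⟨p, hp, (key p hp).symm⟩
  rw [hsets]
end

section
/- Let c₁, …, c_K ∈ ℝⁿ₊, C ∈ ℝⁿ₊, and define the lifted polytope P = {(δ, λ) ∈ ℝⁿ₊ × ℝᴷ₊ : δ = ∑ₖ λₖ cₖ, ∑ₖ λₖ = 1} ⊂ ℝⁿ⁺ᴷ. For any x ∈ {0,1}ⁿ, writing x' = (x, 1) ∈ {0,1}ⁿ⁺ᴷ (the λ-coordinates of x' all equal 1) and first-stage cost vector C' = (C, 0): C'ᵀx' + max_{(δ,λ)∈P} (δ,λ)ᵀ(1 − x') = Cᵀx + max_{k∈[K]} cₖᵀ(1 − x). Consequently min over x ∈ {0,1}ⁿ of the left side equals min over x of the right side. -/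
/-! The adversary's objective on the lifted polytope is `λᵀ(c (1 − x))` once the `λ`-part of
`1 − x'` vanishes, a linear function of `λ` on the standard simplex. Such a function is dominated
by its value at a vertex `eₖ`, and the vertex `(cₖ, eₖ)` lies in the polytope because `cₖ ≥ 0`;
so both suprema are `max_k (Cᵀx + cₖᵀ(1 − x))`. -/

open Finset

theorem exists_sum_mul_le_of_mem_stdSimplex {𝕜 ι : Type*} [Semiring 𝕜] [LinearOrder 𝕜]
    [IsOrderedRing 𝕜] [Nontrivial 𝕜] [Fintype ι] {lam : ι → 𝕜} (hlam : lam ∈ stdSimplex 𝕜 ι)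
    (b : ι → 𝕜) :
    ∃ k, ∑ j, lam j * b j ≤ b k := by
  obtain ⟨hlam_nonneg, hlam_sum⟩ := hlam
  have : Nonempty ι := by
    by_contra h
    simp [not_nonempty_iff.mp h] at hlam_sum
  obtain ⟨k, -, hk⟩ := exists_max_image univ b univ_nonempty
  refine ⟨k, ?_⟩
  calc ∑ j, lam j * b j ≤ ∑ j, lam j * b k :=
        sum_le_sum fun j hj => mul_le_mul_of_nonneg_left (hk j hj) (hlam_nonneg j)
    _ = b k := by rw [← sum_mul, hlam_sum, one_mul]

theorem sSup_liftedPolytope_eq_sSup_scenarios {σ ι : Type*} [Fintype σ] [Fintype ι]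
    (c : ι → σ → ℝ) (hc : ∀ k i, 0 ≤ c k i) (a : ℝ) (y : σ → ℝ) :
    sSup {v : ℝ | ∃ (δ : σ → ℝ) (lam : ι → ℝ),
        (∀ k, 0 ≤ lam k) ∧ (∑ k, lam k) = 1 ∧
        (∀ i, δ i = ∑ k, lam k * c k i) ∧ (∀ i, 0 ≤ δ i) ∧
        v = a + ∑ i, δ i * y i} =
      sSup {v : ℝ | ∃ k, v = a + ∑ i, c k i * y i} := by
  classical
  apply csSup_eq_csSup_of_forall_exists_le
  · rintro _ ⟨δ, lam, hlam_nonneg, hlam_sum, hδ, -, rfl⟩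
    obtain ⟨k, hk⟩ := exists_sum_mul_le_of_mem_stdSimplex ⟨hlam_nonneg, hlam_sum⟩
      fun k => ∑ i, c k i * y i
    have hobjective : ∑ i, δ i * y i = ∑ k, lam k * ∑ i, c k i * y i := by
      simp only [hδ, sum_mul, mul_sum, mul_assoc]
      exact sum_comm
    exact ⟨_, ⟨k, rfl⟩, hobjective ▸ add_le_add_right hk a⟩
  · rintro _ ⟨k, rfl⟩
    refine ⟨_, ⟨c k, Pi.single k 1, fun j => by by_cases hj : j = k <;> simp [hj], by simp,
      fun i => by simp [Pi.single_apply], hc k, rfl⟩, le_rfl⟩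

theorem stmt16_general (n K : ℕ) (c : Fin K → Fin n → ℝ)
    (hc : ∀ k i, 0 ≤ c k i) (C : Fin n → ℝ) :
    (∀ x : Fin n → ℝ, (∀ i, x i = 0 ∨ x i = 1) →
      sSup {v : ℝ | ∃ (δ : Fin n → ℝ) (lam : Fin K → ℝ),
          (∀ k, 0 ≤ lam k) ∧ (∑ k, lam k) = 1 ∧
          (∀ i, δ i = ∑ k, lam k * c k i) ∧ (∀ i, 0 ≤ δ i) ∧
          v = ((∑ i, C i * x i) + ∑ _k : Fin K, (0 : ℝ) * 1) +
            ((∑ i, δ i * (1 - x i)) + ∑ k, lam k * (1 - (1 : ℝ)))} =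
        sSup {v : ℝ | ∃ k : Fin K, v = (∑ i, C i * x i) + ∑ i, c k i * (1 - x i)}) ∧
    sInf {v : ℝ | ∃ x : Fin n → ℝ, (∀ i, x i = 0 ∨ x i = 1) ∧
        v = sSup {w : ℝ | ∃ (δ : Fin n → ℝ) (lam : Fin K → ℝ),
          (∀ k, 0 ≤ lam k) ∧ (∑ k, lam k) = 1 ∧
          (∀ i, δ i = ∑ k, lam k * c k i) ∧ (∀ i, 0 ≤ δ i) ∧
          w = ((∑ i, C i * x i) + ∑ _k : Fin K, (0 : ℝ) * 1) +
            ((∑ i, δ i * (1 - x i)) + ∑ k, lam k * (1 - (1 : ℝ)))}} =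
      sInf {v : ℝ | ∃ x : Fin n → ℝ, (∀ i, x i = 0 ∨ x i = 1) ∧
        v = sSup {w : ℝ | ∃ k : Fin K,
          w = (∑ i, C i * x i) + ∑ i, c k i * (1 - x i)}} := by
  simp only [zero_mul, sub_self, mul_zero, sum_const_zero, add_zero,
    sSup_liftedPolytope_eq_sSup_scenarios c hc, implies_true, and_self]

/-- The lifted H-polytope gadget: with the `λ`-coordinates of the first-stage
solution fixed to `1` (at first-stage cost `0`), the adversarial maximum over
the lifted polytope `P = {(δ, λ) ≥ 0 : δ = ∑ λₖcₖ, ∑ λₖ = 1}` equals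
`max_k (Cᵀx + cₖᵀ(1 − x))`; hence the two `RTSt₁` optima coincide. -/
theorem stmt16 (n K : ℕ) (hK : 0 < K) (c : Fin K → Fin n → ℝ)
    (hc : ∀ k i, 0 ≤ c k i) (C : Fin n → ℝ) (hC : ∀ i, 0 ≤ C i) :
    (∀ x : Fin n → ℝ, (∀ i, x i = 0 ∨ x i = 1) →
      sSup {v : ℝ | ∃ (δ : Fin n → ℝ) (lam : Fin K → ℝ),
          (∀ k, 0 ≤ lam k) ∧ (∑ k, lam k) = 1 ∧
          (∀ i, δ i = ∑ k, lam k * c k i) ∧ (∀ i, 0 ≤ δ i) ∧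
          v = ((∑ i, C i * x i) + ∑ _k : Fin K, (0 : ℝ) * 1) +
            ((∑ i, δ i * (1 - x i)) + ∑ k, lam k * (1 - (1 : ℝ)))} =
        sSup {v : ℝ | ∃ k : Fin K, v = (∑ i, C i * x i) + ∑ i, c k i * (1 - x i)}) ∧
    sInf {v : ℝ | ∃ x : Fin n → ℝ, (∀ i, x i = 0 ∨ x i = 1) ∧
        v = sSup {w : ℝ | ∃ (δ : Fin n → ℝ) (lam : Fin K → ℝ),
          (∀ k, 0 ≤ lam k) ∧ (∑ k, lam k) = 1 ∧
          (∀ i, δ i = ∑ k, lam k * c k i) ∧ (∀ i, 0 ≤ δ i) ∧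
          w = ((∑ i, C i * x i) + ∑ _k : Fin K, (0 : ℝ) * 1) +
            ((∑ i, δ i * (1 - x i)) + ∑ k, lam k * (1 - (1 : ℝ)))}} =
      sInf {v : ℝ | ∃ x : Fin n → ℝ, (∀ i, x i = 0 ∨ x i = 1) ∧
        v = sSup {w : ℝ | ∃ k : Fin K,
          w = (∑ i, C i * x i) + ∑ i, c k i * (1 - x i)}} :=
  stmt16_general n K c hc C
end

section
/- Let f : [0,1] → ℝ be defined by f(π) = Γπ + ∑_{l∈S} g_l(π), where for each l in a finite index set S, g_l(π) is the optimal value of the LP: minimize ∑_{j∈T_l} c̲ⱼ uⱼ + ∑_{j∈T_l}(c̲ⱼ + dⱼ) vⱼ subject to ∑_{j∈T_l}(uⱼ + vⱼ) = 1, 0 ≤ uⱼ ≤ π, 0 ≤ vⱼ ≤ 1 − π (with c̲ⱼ, dⱼ ≥ 0, T_l finite and large enough for feasibility). Then f attains its minimum over [0,1] at some π ∈ {0} ∪ {1/p : p ∈ {1, …, n}}, where n = ∑_l |T_l|. -/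
/-!
Each `g_l` is concave on every interval between consecutive candidates, `[0, 1/n]` and
`[1/(q+1), 1/q]`, hence so is `f`, and a concave function on an interval is minimised at an
endpoint. For concavity of `g_l` on such an interval `[π₁, π₂]`, take a feasible point at
`π = a π₁ + b π₂`. Moving mass from `w` to `u` first (this costs nothing more since `d ≥ 0`), we
may assume `w j > 0` only where `u j = π`. The point then splits as `a x₁ + b x₂` with `xᵢ`
feasible at `πᵢ`: the split exists unless some counts `p`, `q` of saturated `u`'s and `w`'s cross
the constraint `p π + q (1 - π) = 1` strictly inside the interval, and this happens only at the
candidates.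
-/

open Finset

theorem add_mul_csInf_le_csInf {S S₁ S₂ : Set ℝ} {a b : ℝ} (hS : S.Nonempty)
    (h₁ : BddBelow S₁) (h₂ : BddBelow S₂) (ha : 0 ≤ a) (hb : 0 ≤ b)
    (h : ∀ v ∈ S, ∃ v₁ ∈ S₁, ∃ v₂ ∈ S₂, a * v₁ + b * v₂ ≤ v) :
    a * sInf S₁ + b * sInf S₂ ≤ sInf S :=
  le_csInf hS fun v hv => by
    obtain ⟨v₁, hv₁, v₂, hv₂, hle⟩ := h v hv
    have := mul_le_mul_of_nonneg_left (csInf_le h₁ hv₁) ha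
    have := mul_le_mul_of_nonneg_left (csInf_le h₂ hv₂) hb
    linarith

theorem Finset.exists_split_of_le_sum_min {κ : Type*} (s : Finset κ) {x α β : κ → ℝ} {P : ℝ}
    (hx : ∀ j ∈ s, 0 ≤ x j) (hα : ∀ j ∈ s, 0 ≤ α j) (hβ : ∀ j ∈ s, 0 ≤ β j)
    (hxαβ : ∀ j ∈ s, x j ≤ α j + β j)
    (hPα : P ≤ ∑ j ∈ s, min (x j) (α j)) (hPβ : ∑ j ∈ s, x j - P ≤ ∑ j ∈ s, min (x j) (β j)) :
    ∃ p : κ → ℝ, (∀ j ∈ s, 0 ≤ p j ∧ p j ≤ α j ∧ 0 ≤ x j - p j ∧ x j - p j ≤ β j) ∧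
      ∑ j ∈ s, p j = P := by
  set lo : κ → ℝ := fun j => x j - min (x j) (β j)
  set hi : κ → ℝ := fun j => min (x j) (α j)
  have hlohi : ∀ j ∈ s, lo j ≤ hi j := fun j hj => by
    have := hx j hj; have := hα j hj; have := hβ j hj; have := hxαβ j hj
    simp only [lo, hi]
    rcases min_cases (x j) (β j) with h | h <;> rw [h.1] <;> apply le_min <;> linarith
  obtain ⟨a, b, ha, hb, hab, hsum⟩ :
      P ∈ segment ℝ (∑ j ∈ s, lo j) (∑ j ∈ s, hi j) := by
    rw [segment_eq_Icc (sum_le_sum hlohi)]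
    refine ⟨?_, hPα⟩
    simp only [lo, sum_sub_distrib]
    linarith
  refine ⟨fun j => a * lo j + b * hi j, fun j hj => ?_, ?_⟩
  · have hmem : a * lo j + b * hi j ∈ Set.Icc (lo j) (hi j) :=
      segment_subset_Icc (hlohi j hj) ⟨a, b, ha, hb, hab, rfl⟩
    simp only [lo, hi] at hmem ⊢
    have := min_le_left (x j) (α j); have := min_le_right (x j) (α j)
    have := min_le_left (x j) (β j); have := min_le_right (x j) (β j)
    refine ⟨?_, ?_, ?_, ?_⟩ <;> linarith [hmem.1, hmem.2]
  · simpa only [sum_add_distrib, ← mul_sum, smul_eq_mul] using hsum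

theorem ConcaveOn.fun_sum {ι E : Type*} [AddCommMonoid E] [Module ℝ E] {s : Set E}
    (hs : Convex ℝ s) (t : Finset ι) {f : ι → E → ℝ} (hf : ∀ i ∈ t, ConcaveOn ℝ s (f i)) :
    ConcaveOn ℝ s fun x => ∑ i ∈ t, f i x := by
  rw [← sum_fn]
  exact sum_induction f (ConcaveOn ℝ s) (fun _ _ => ConcaveOn.add) (concaveOn_const 0 hs) hf

theorem Finset.card_filter_lt_mul_le_sum_min {κ : Type*} (s : Finset κ) {x : κ → ℝ} (c : ℝ)
    (hx : ∀ j ∈ s, 0 ≤ x j) : #(s.filter (c < x ·)) * c ≤ ∑ j ∈ s, min (x j) c := by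
  rw [← sum_boole, sum_mul]
  refine sum_le_sum fun j hj => ?_
  split_ifs with h
  · rw [one_mul, min_eq_right h.le]
  · rw [zero_mul, min_eq_left (not_lt.1 h)]
    exact hx j hj

theorem Finset.sum_sub_card_filter_lt_mul_le_sum_min {κ : Type*} (s : Finset κ) {x : κ → ℝ}
    {c e : ℝ} (hx : ∀ j ∈ s, x j ≤ c + e) :
    ∑ j ∈ s, x j - #(s.filter (c < x ·)) * e ≤ ∑ j ∈ s, min (x j) c := by
  rw [← sum_boole, sum_mul, ← sum_sub_distrib]
  refine sum_le_sum fun j hj => ?_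
  split_ifs with h
  · rw [one_mul, min_eq_right h.le]
    linarith [hx j hj]
  · rw [zero_mul, sub_zero, min_eq_left (not_lt.1 h)]

namespace RepresentativesLP

variable {ι : Type*} (T : Finset ι) (cb d : ι → ℝ)

def IsFeasible (π : ℝ) (u w : ι → ℝ) : Prop :=
  (∀ j ∈ T, 0 ≤ u j ∧ u j ≤ π ∧ 0 ≤ w j ∧ w j ≤ 1 - π) ∧ ∑ j ∈ T, (u j + w j) = 1

def cost (u w : ι → ℝ) : ℝ := ∑ j ∈ T, (cb j * u j + (cb j + d j) * w j)

def valueSet (π : ℝ) : Set ℝ := {v | ∃ u w, IsFeasible T π u w ∧ v = cost T cb d u w}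

noncomputable def lpValue (π : ℝ) : ℝ := sInf (valueSet T cb d π)

/-- The breakpoints of `lpValue` are the `π` with `p π + q (1 - π) = 1`, where `p` and `q` count
the variables at their upper bounds. -/
def NoBreakpoint (N : ℕ) (π₁ π₂ : ℝ) : Prop :=
  ∀ p q : ℕ, p ≤ N → q ≤ N → p * π₁ + q * (1 - π₁) < 1 → p * π₂ + q * (1 - π₂) ≤ 1

variable {T cb d}

theorem valueSet_nonempty (hT : T.Nonempty) {π : ℝ} (h₀ : 0 ≤ π) (h₁ : π ≤ 1) :
    (valueSet T cb d π).Nonempty := by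
  classical
  obtain ⟨j₀, hj₀⟩ := hT
  refine ⟨_, Pi.single j₀ π, Pi.single j₀ (1 - π), ⟨fun j _ => ?_, ?_⟩, rfl⟩
  · by_cases h : j = j₀
    · subst h
      simp only [Pi.single_eq_same]
      exact ⟨h₀, le_rfl, by linarith, le_rfl⟩
    · simp [h, h₀, h₁]
  · simp [sum_add_distrib, hj₀]

theorem valueSet_bddBelow (hd : ∀ j, 0 ≤ d j) (π : ℝ) :
    BddBelow (valueSet T cb d π) := by
  refine ⟨-∑ j ∈ T, |cb j|, ?_⟩
  rintro _ ⟨u, w, ⟨hbd, hsum⟩, rfl⟩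
  rw [← sum_neg_distrib]
  refine sum_le_sum fun j hj => ?_
  obtain ⟨hu, -, hw, -⟩ := hbd j hj
  have hle : u j + w j ≤ 1 :=
    hsum ▸ single_le_sum (f := fun j => u j + w j) (fun k hk => by
      linarith [(hbd k hk).1, (hbd k hk).2.2.1]) hj
  have := neg_abs_le (cb j)
  have := mul_nonneg (hd j) hw
  nlinarith [abs_nonneg (cb j)]

variable {u w : ι → ℝ} {π : ℝ}

theorem IsFeasible.exists_normalized (hd : ∀ j, 0 ≤ d j) (h : IsFeasible T π u w) :
    ∃ u' w', IsFeasible T π u' w' ∧ (∀ j ∈ T, 0 < w' j → u' j = π) ∧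
      cost T cb d u' w' ≤ cost T cb d u w := by
  obtain ⟨hbd, hsum⟩ := h
  refine ⟨fun j => min π (u j + w j), fun j => u j + w j - min π (u j + w j),
    ⟨fun j hj => ?_, ?_⟩, fun j _ hj => ?_, sum_le_sum fun j hj => ?_⟩
  · dsimp only
    obtain ⟨hu₀, hu, hw, hw'⟩ := hbd j hj
    have := min_le_left π (u j + w j); have := min_le_right π (u j + w j)
    have := le_min hu (by linarith : u j ≤ u j + w j)
    refine ⟨by linarith, by linarith, by linarith, by linarith⟩
  · simpa using hsum
  · exact min_eq_left (not_lt.1 fun h' => by simp [min_eq_right h'.le] at hj)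
  · dsimp only
    obtain ⟨-, hu, hw, -⟩ := hbd j hj
    have := le_min hu (by linarith : u j ≤ u j + w j)
    nlinarith [hd j]

variable {a b π₁ π₂ : ℝ} {N : ℕ}

theorem IsFeasible.le_sum_min_of_noBreakpoint (h : IsFeasible T (a * π₁ + b * π₂) u w)
    (ha : 0 ≤ a) (hb : 0 ≤ b) (hab : a + b = 1) (hN : #T ≤ N) (hbp : NoBreakpoint N π₁ π₂) :
    a ≤ ∑ j ∈ T, min (u j) (a * π₁) + ∑ j ∈ T, min (w j) (a * (1 - π₁)) := by
  obtain ⟨hbd, hsum⟩ := h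
  set p := #(T.filter (a * π₁ < u ·))
  set q := #(T.filter (a * (1 - π₁) < w ·))
  have hu₁ := T.card_filter_lt_mul_le_sum_min (a * π₁) fun j hj => (hbd j hj).1
  have hw₁ := T.card_filter_lt_mul_le_sum_min (a * (1 - π₁)) fun j hj => (hbd j hj).2.2.1
  have hu₂ := T.sum_sub_card_filter_lt_mul_le_sum_min (c := a * π₁) (e := b * π₂)
    fun j hj => (hbd j hj).2.1
  have hw₂ := T.sum_sub_card_filter_lt_mul_le_sum_min (x := w) (c := a * (1 - π₁))
    (e := b * (1 - π₂)) fun j hj => by linarith [(hbd j hj).2.2.2]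
  rw [sum_add_distrib] at hsum
  by_cases hpq : p * π₁ + q * (1 - π₁) < 1
  · have := hbp p q (card_filter_le _ _ |>.trans hN) (card_filter_le _ _ |>.trans hN) hpq
    nlinarith
  · nlinarith

theorem IsFeasible.le_sum_min_of_normalized (h : IsFeasible T π u w)
    (hnorm : ∀ j ∈ T, 0 < w j → u j = π) (hb₀ : 0 ≤ b) (hb₁ : b ≤ 1) (hπ : π ≤ π₂)
    (hπ₂ : π₂ ≤ 1) (hbπ : b * π₂ ≤ π) :
    b ≤ ∑ j ∈ T, min (u j) (b * π₂) + ∑ j ∈ T, min (w j) (b * (1 - π₂)) := by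
  obtain ⟨hbd, hsum⟩ := h
  rw [← sum_add_distrib]
  by_cases hsat : ∃ j ∈ T, b * (1 - π₂) < w j
  · -- a variable with `w j` above its share has `u j = π`, and alone already carries `b`
    obtain ⟨j₀, hj₀, hw₀⟩ := hsat
    have hu₀ : u j₀ = π := hnorm j₀ hj₀ (by nlinarith)
    have hπ₀ : 0 ≤ π := hu₀ ▸ (hbd j₀ hj₀).1
    have hnonneg : ∀ j ∈ T, 0 ≤ min (u j) (b * π₂) + min (w j) (b * (1 - π₂)) := fun j hj =>
      add_nonneg (le_min (hbd j hj).1 (by nlinarith)) (le_min (hbd j hj).2.2.1 (by nlinarith))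
    calc b = min (u j₀) (b * π₂) + min (w j₀) (b * (1 - π₂)) := by
          rw [min_eq_right (hu₀ ▸ hbπ), min_eq_right hw₀.le]; ring
      _ ≤ _ := single_le_sum hnonneg hj₀
  · push Not at hsat
    calc b = ∑ j ∈ T, b * (u j + w j) := by rw [← mul_sum, hsum, mul_one]
      _ ≤ _ := sum_le_sum fun j hj => by
        obtain ⟨hu₀, hu, hw₀, -⟩ := hbd j hj
        rw [min_eq_left (hsat j hj)]
        have : b * u j ≤ min (u j) (b * π₂) :=
          le_min (by nlinarith) (mul_le_mul_of_nonneg_left (hu.trans hπ) hb₀)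
        nlinarith

theorem IsFeasible.exists_decomposition (h : IsFeasible T (a * π₁ + b * π₂) u w)
    (hnorm : ∀ j ∈ T, 0 < w j → u j = a * π₁ + b * π₂) (ha : 0 < a) (hb : 0 < b)
    (hab : a + b = 1) (hπ₁ : 0 ≤ π₁) (hπ₁₂ : π₁ ≤ π₂) (hπ₂ : π₂ ≤ 1) (hN : #T ≤ N)
    (hbp : NoBreakpoint N π₁ π₂) :
    ∃ u₁ w₁ u₂ w₂, IsFeasible T π₁ u₁ w₁ ∧ IsFeasible T π₂ u₂ w₂ ∧
      a * cost T cb d u₁ w₁ + b * cost T cb d u₂ w₂ = cost T cb d u w := by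
  have hsum : ∑ j ∈ T, u j + ∑ j ∈ T, w j = 1 := by rw [← sum_add_distrib]; exact h.2
  have hlow := h.le_sum_min_of_noBreakpoint ha.le hb.le hab hN hbp
  have hup := h.le_sum_min_of_normalized hnorm hb.le (by linarith) (by nlinarith) hπ₂ (by nlinarith)
  obtain ⟨p, hp, hpsum⟩ := (T.disjSum T).exists_split_of_le_sum_min (x := Sum.elim u w)
    (α := Sum.elim (fun _ => a * π₁) (fun _ => a * (1 - π₁)))
    (β := Sum.elim (fun _ => b * π₂) (fun _ => b * (1 - π₂))) (P := a)
    (by rintro (j | j) hj <;> simp only [inl_mem_disjSum, inr_mem_disjSum] at hj <;>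
      simp [(h.1 j hj).1, (h.1 j hj).2.2.1])
    (by rintro (j | j) - <;> simp only [Sum.elim_inl, Sum.elim_inr] <;> nlinarith)
    (by rintro (j | j) - <;> simp only [Sum.elim_inl, Sum.elim_inr] <;> nlinarith)
    (by rintro (j | j) hj <;> simp only [inl_mem_disjSum, inr_mem_disjSum] at hj <;>
      simp only [Sum.elim_inl, Sum.elim_inr] <;> linarith [h.1 j hj])
    (by simpa using hlow)
    (by simp only [sum_disjSum, Sum.elim_inl, Sum.elim_inr, hsum]; linarith)
  have hpu := fun j hj => hp (.inl j) (inl_mem_disjSum.2 hj)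
  have hpw := fun j hj => hp (.inr j) (inr_mem_disjSum.2 hj)
  simp only [Sum.elim_inl, Sum.elim_inr] at hpu hpw
  rw [sum_disjSum] at hpsum
  refine ⟨fun j => p (.inl j) / a, fun j => p (.inr j) / a,
    fun j => (u j - p (.inl j)) / b, fun j => (w j - p (.inr j)) / b,
    ⟨fun j hj => ?_, ?_⟩, ⟨fun j hj => ?_, ?_⟩, ?_⟩
  · obtain ⟨h₁, h₂, -, -⟩ := hpu j hj
    obtain ⟨h₃, h₄, -, -⟩ := hpw j hj
    refine ⟨by positivity, ?_, by positivity, ?_⟩ <;> rw [div_le_iff₀ ha] <;> linarith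
  · simp only [← add_div, ← sum_div, sum_add_distrib, hpsum, div_self ha.ne']
  · obtain ⟨-, -, h₁, h₂⟩ := hpu j hj
    obtain ⟨-, -, h₃, h₄⟩ := hpw j hj
    refine ⟨by positivity, ?_, by positivity, ?_⟩ <;> rw [div_le_iff₀ hb] <;> linarith
  · simp only [← add_div, ← sum_div, sum_add_distrib, sum_sub_distrib]
    rw [div_eq_one_iff_eq hb.ne']
    linarith
  · simp only [cost, mul_sum, ← sum_add_distrib]
    refine sum_congr rfl fun j _ => ?_
    field_simp
    ring

theorem NoBreakpoint.mono (h : NoBreakpoint N π₁ π₂) {x y : ℝ} (hx : π₁ ≤ x) (hxy : x ≤ y)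
    (hy : y ≤ π₂) : NoBreakpoint N x y := by
  intro p q hp hq hlt
  rcases le_total (q : ℝ) p with hqp | hpq
  · have := h p q hp hq (by nlinarith)
    nlinarith
  · nlinarith

theorem noBreakpoint_zero_one_div (n : ℕ) : NoBreakpoint n 0 (1 / n) := by
  intro p q hp _ hlt
  obtain rfl : q = 0 := by simpa using hlt
  simpa [div_eq_mul_inv] using div_le_one_of_le₀ (by exact_mod_cast hp) n.cast_nonneg

theorem noBreakpoint_one_div_succ_one_div {q : ℕ} (hq : 0 < q) (N : ℕ) :
    NoBreakpoint N (1 / (q + 1)) (1 / q) := by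
  intro p r _ _ hlt
  have hq' : (0 : ℝ) < q := by exact_mod_cast hq
  rw [show (p : ℝ) * (1 / (q + 1)) + r * (1 - 1 / (q + 1)) = (p + r * q) / (q + 1) by
    field_simp; ring, div_lt_one (by positivity)] at hlt
  have hlt' : p + r * q < q + 1 := by exact_mod_cast hlt
  have hle : ((p + r * q : ℕ) : ℝ) ≤ q := by exact_mod_cast Nat.lt_succ_iff.1 hlt'
  push_cast at hle
  rw [show (p : ℝ) * (1 / q) + r * (1 - 1 / q) = (p + r * q - r) / q by field_simp; ring,
    div_le_one hq']
  linarith [(r.cast_nonneg : (0 : ℝ) ≤ r)]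

theorem concaveOn_lpValue (hT : T.Nonempty) (hd : ∀ j, 0 ≤ d j) (hπ₁ : 0 ≤ π₁) (hπ₂ : π₂ ≤ 1)
    (hN : #T ≤ N) (hbp : NoBreakpoint N π₁ π₂) :
    ConcaveOn ℝ (Set.Icc π₁ π₂) (lpValue T cb d) := by
  refine LinearOrder.concaveOn_of_lt (convex_Icc _ _) fun x hx y hy hxy a b ha hb hab => ?_
  simp only [smul_eq_mul]
  have hx₀ : 0 ≤ x := hπ₁.trans hx.1
  have hy₁ : y ≤ 1 := hy.2.trans hπ₂
  refine add_mul_csInf_le_csInf (valueSet_nonempty hT (by nlinarith) (by nlinarith))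
    (valueSet_bddBelow hd _) (valueSet_bddBelow hd _) ha.le hb.le ?_
  rintro _ ⟨u, w, hfeas, rfl⟩
  obtain ⟨u', w', hfeas', hnorm, hle⟩ := hfeas.exists_normalized hd
  obtain ⟨u₁, w₁, u₂, w₂, h₁, h₂, hcost⟩ := hfeas'.exists_decomposition hnorm ha hb hab hx₀
    hxy.le hy₁ hN (hbp.mono hx.1 hxy.le hy.2)
  exact ⟨_, ⟨u₁, w₁, h₁, rfl⟩, _, ⟨u₂, w₂, h₂, rfl⟩, hcost.le.trans hle⟩

theorem concaveOn_mul_add_sum_lpValue {κ : Type*} (s : Finset κ) {T : κ → Finset ι}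
    (hT : ∀ l ∈ s, (T l).Nonempty) (hd : ∀ j, 0 ≤ d j) (Γ : ℝ) (hπ₁ : 0 ≤ π₁) (hπ₂ : π₂ ≤ 1)
    (hN : ∀ l ∈ s, #(T l) ≤ N) (hbp : NoBreakpoint N π₁ π₂) :
    ConcaveOn ℝ (Set.Icc π₁ π₂) fun π => Γ * π + ∑ l ∈ s, lpValue (T l) cb d π :=
  ((LinearMap.mul ℝ ℝ Γ).concaveOn (convex_Icc _ _)).add <| ConcaveOn.fun_sum (convex_Icc _ _) s
    fun l hl => concaveOn_lpValue (hT l hl) hd hπ₁ hπ₂ (hN l hl) hbp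

noncomputable def candidates (n : ℕ) : Finset ℝ :=
  insert 0 ((Finset.Icc 1 n).image fun p : ℕ => 1 / (p : ℝ))

theorem zero_mem_candidates (n : ℕ) : 0 ∈ candidates n := mem_insert_self _ _

theorem mem_candidates {n : ℕ} {x : ℝ} :
    x ∈ candidates n ↔ x = 0 ∨ ∃ p : ℕ, 1 ≤ p ∧ p ≤ n ∧ x = 1 / (p : ℝ) := by
  simp [candidates, eq_comm, and_assoc]

theorem one_div_mem_candidates {n p : ℕ} (hp : 0 < p) (hpn : p ≤ n) :
    1 / (p : ℝ) ∈ candidates n :=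
  mem_candidates.2 (.inr ⟨p, hp, hpn, rfl⟩)

theorem mem_Icc_of_mem_candidates {n : ℕ} {x : ℝ} (hx : x ∈ candidates n) : x ∈ Set.Icc 0 1 := by
  obtain rfl | ⟨p, hp, -, rfl⟩ := mem_candidates.1 hx
  · simp
  · exact ⟨by positivity, div_le_one_of_le₀ (by exact_mod_cast hp) (by positivity)⟩

theorem exists_candidates_noBreakpoint {n : ℕ} (hn : 0 < n) {π : ℝ} (hπ : π ∈ Set.Icc 0 1) :
    ∃ x ∈ candidates n, ∃ y ∈ candidates n, π ∈ Set.Icc x y ∧ NoBreakpoint n x y := by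
  by_cases hsmall : π ≤ 1 / n
  · exact ⟨0, zero_mem_candidates n, _, one_div_mem_candidates hn le_rfl, ⟨hπ.1, hsmall⟩,
      noBreakpoint_zero_one_div n⟩
  push Not at hsmall
  have hπ₀ : 0 < π := lt_of_le_of_lt (by positivity) hsmall
  set q := ⌊1 / π⌋₊
  have hq₁ : 1 ≤ q := Nat.le_floor (by rw [Nat.cast_one, le_div_iff₀ hπ₀]; linarith [hπ.2])
  have hqπ : (q : ℝ) ≤ 1 / π := Nat.floor_le (by positivity)
  have hπq : 1 / π < q + 1 := Nat.lt_floor_add_one _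
  have hqn : q < n := by
    have : 1 / π < n := by rwa [div_lt_iff₀ hπ₀, ← div_lt_iff₀' (by positivity)]
    exact_mod_cast hqπ.trans_lt this
  refine ⟨_, by exact_mod_cast one_div_mem_candidates q.succ_pos hqn, _,
    one_div_mem_candidates hq₁ hqn.le, ⟨?_, ?_⟩, noBreakpoint_one_div_succ_one_div hq₁ n⟩
  · rw [div_le_iff₀ (by positivity)]; rw [div_lt_iff₀ hπ₀] at hπq; linarith
  · rw [le_div_iff₀ (by positivity)]; rw [le_div_iff₀ hπ₀] at hqπ; linarith

end RepresentativesLP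

open RepresentativesLP in
theorem stmt18_general (n L : ℕ) (T : Fin L → Finset (Fin n))
    (hT : ∀ l, (T l).Nonempty) (hn : n = ∑ l, (T l).card)
    (cb d : Fin n → ℝ) (hd : ∀ j, 0 ≤ d j)
    (Γ : ℝ) (hΓ : 0 ≤ Γ)
    (g : Fin L → ℝ → ℝ)
    (hg : ∀ l π, g l π = sInf {v : ℝ | ∃ u w : Fin n → ℝ,
      (∀ j ∈ T l, 0 ≤ u j ∧ u j ≤ π ∧ 0 ≤ w j ∧ w j ≤ 1 - π) ∧
      (∑ j ∈ T l, (u j + w j)) = 1 ∧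
      v = ∑ j ∈ T l, (cb j * u j + (cb j + d j) * w j)})
    (f : ℝ → ℝ) (hf : ∀ π, f π = Γ * π + ∑ l, g l π) :
    ∃ π ∈ Set.Icc (0 : ℝ) 1,
      (π = 0 ∨ ∃ p : ℕ, 1 ≤ p ∧ p ≤ n ∧ π = 1 / (p : ℝ)) ∧
      ∀ π' ∈ Set.Icc (0 : ℝ) 1, f π ≤ f π' := by
  rcases Nat.eq_zero_or_pos n with rfl | hn₀
  · have hf' : ∀ π, f π = Γ * π := fun π => by
      simp [hf, sum_eq_zero fun l _ => (hT l).choose.elim0]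
    exact ⟨0, by simp, .inl rfl, fun π' hπ' => by rw [hf', hf']; nlinarith [hπ'.1]⟩
  have hG : f = fun π => Γ * π + ∑ l, lpValue (T l) cb d π := funext fun π => by
    simp only [hf, hg, lpValue, valueSet, IsFeasible, cost, and_assoc]
  have hcard : ∀ l ∈ univ, #(T l) ≤ n := fun l hl =>
    (single_le_sum (f := fun l => #(T l)) (fun _ _ => Nat.zero_le _) hl).trans_eq hn.symm
  obtain ⟨π, hπC, hπmin⟩ := (candidates n).exists_min_image f ⟨0, zero_mem_candidates n⟩
  refine ⟨π, mem_Icc_of_mem_candidates hπC, mem_candidates.1 hπC, fun π' hπ' => ?_⟩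
  obtain ⟨x, hx, y, hy, hπ'xy, hxy⟩ := exists_candidates_noBreakpoint hn₀ hπ'
  have hconc : ConcaveOn ℝ (Set.Icc x y) f := hG ▸ concaveOn_mul_add_sum_lpValue univ
    (fun l _ => hT l) hd Γ (mem_Icc_of_mem_candidates hx).1 (mem_Icc_of_mem_candidates hy).2
    hcard hxy
  have hxy' : x ≤ y := hπ'xy.1.trans hπ'xy.2
  calc f π ≤ min (f x) (f y) := le_min (hπmin x hx) (hπmin y hy)
    _ ≤ f π' := hconc.min_le_of_mem_Icc (Set.left_mem_Icc.2 hxy') (Set.right_mem_Icc.2 hxy') hπ'xy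

/-- The piecewise-linear function `f(π) = Γπ + ∑_l g_l(π)`, where `g_l(π)` is
the value of the packing LP on tool set `T_l`, attains its minimum over `[0,1]`
at some `π ∈ {0} ∪ {1/p : p ∈ [n]}`. -/
theorem stmt18 (n L : ℕ) (T : Fin L → Finset (Fin n))
    (hT : ∀ l, (T l).Nonempty) (hn : n = ∑ l, (T l).card)
    (cb d : Fin n → ℝ) (hcb : ∀ j, 0 ≤ cb j) (hd : ∀ j, 0 ≤ d j)
    (Γ : ℝ) (hΓ : 0 ≤ Γ)
    (g : Fin L → ℝ → ℝ)
    (hg : ∀ l π, g l π = sInf {v : ℝ | ∃ u w : Fin n → ℝ,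
      (∀ j ∈ T l, 0 ≤ u j ∧ u j ≤ π ∧ 0 ≤ w j ∧ w j ≤ 1 - π) ∧
      (∑ j ∈ T l, (u j + w j)) = 1 ∧
      v = ∑ j ∈ T l, (cb j * u j + (cb j + d j) * w j)})
    (f : ℝ → ℝ) (hf : ∀ π, f π = Γ * π + ∑ l, g l π) :
    ∃ π ∈ Set.Icc (0 : ℝ) 1,
      (π = 0 ∨ ∃ p : ℕ, 1 ≤ p ∧ p ≤ n ∧ π = 1 / (p : ℝ)) ∧
      ∀ π' ∈ Set.Icc (0 : ℝ) 1, f π ≤ f π' :=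
  stmt18_general n L T hT hn cb d hd Γ hΓ g hg f hf
end
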